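/- Let α be a type with decidable equality and m a multiset over α such that every element has multiplicity at most 2 in m. Then the number of ordered pairs (s, t) of duplicate-free multisets with s + t = m equals 2^k, where k is the number of elements whose multiplicity in m is exactly 1. -/

import Mathlib

/-!
A nodup split `(s, t)` of `m` is determined by its first part `s`, a finset with `s.val ≤ m`
and `m - s.val` nodup. When all multiplicities are at most 2 these conditions say exactly
that `s` contains every element of multiplicity 2 and lies inside the support of `m`, so the
admissible `s` form a Boolean interval of dimension the number of elements of multiplicity 1.
-/

namespace Multiset

variable {α : Type*} [DecidableEq α]

def nodupSplitsEquiv (m : Multiset α) :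
    {p : Multiset α × Multiset α // p.1.Nodup ∧ p.2.Nodup ∧ p.1 + p.2 = m} ≃
      {s : Finset α // s.val ≤ m ∧ (m - s.val).Nodup} where
  toFun p := ⟨⟨p.1.1, p.2.1⟩, by
    obtain ⟨⟨s, t⟩, -, ht, rfl⟩ := p
    simpa using ht⟩
  invFun s := ⟨(s.1.val, m - s.1.val), s.1.nodup, s.2.2, add_tsub_cancel_of_le s.2.1⟩
  left_inv := by
    rintro ⟨⟨s, t⟩, hs, ht, rfl⟩
    simp
  right_inv _ := rfl

theorem val_le_and_nodup_sub_iff_mem_Icc {m : Multiset α} (hm : ∀ a, m.count a ≤ 2)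
    (s : Finset α) :
    s.val ≤ m ∧ (m - s.val).Nodup ↔
      s ∈ Finset.Icc (m.toFinset.filter fun a => m.count a = 2) m.toFinset := by
  simp only [Finset.mem_Icc, Finset.subset_iff, Finset.mem_filter, mem_toFinset, le_iff_count,
    nodup_iff_count_le_one, count_sub, ← forall_and]
  refine forall_congr' fun a => ?_
  rw [← Finset.mem_val, ← count_pos, count_eq_of_nodup s.nodup]
  have := hm a
  split_ifs <;> grind

theorem card_filter_count_eq_one_add_card_filter_count_eq_two {m : Multiset α}
    (hm : ∀ a, m.count a ≤ 2) :
    (m.toFinset.filter fun a => m.count a = 1).card +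
      (m.toFinset.filter fun a => m.count a = 2).card = m.toFinset.card := by
  rw [← Finset.card_filter_add_card_filter_not (s := m.toFinset) fun a => m.count a = 1]
  congr 2
  refine Finset.filter_congr fun a ha => ?_
  rw [mem_toFinset, ← count_pos] at ha
  have := hm a
  omega

end Multiset

/-- If every element has multiplicity at most 2 in `m`, the number of ordered
pairs `(s, t)` of duplicate-free multisets with `s + t = m` is `2 ^ k`, where `k`
is the number of elements of multiplicity exactly 1 in `m`. -/
theorem card_nodup_splits {α : Type*} [DecidableEq α] (m : Multiset α)
    (hm : ∀ a : α, m.count a ≤ 2) :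
    Nat.card {p : Multiset α × Multiset α // p.1.Nodup ∧ p.2.Nodup ∧ p.1 + p.2 = m} =
      2 ^ (m.toFinset.filter fun a => m.count a = 1).card := by
  rw [Nat.card_congr ((Multiset.nodupSplitsEquiv m).trans
      (Equiv.subtypeEquivRight (Multiset.val_le_and_nodup_sub_iff_mem_Icc hm))),
    Nat.card_eq_fintype_card, Fintype.card_coe, Finset.card_Icc_finset (Finset.filter_subset _ _),
    ← Multiset.card_filter_count_eq_one_add_card_filter_count_eq_two hm, Nat.add_sub_cancel]
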